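/- arXiv:2112.10410 — 3 statements merged into one kernel-verified Lean document; each statement's English description precedes it below -/
import Mathlib

section
/- If N ≥ 2 is a prime number, or if N ∈ {4, 6, 8, 12, 24}, then N is monomially irreducible. -/
/-!
If the `k`-monomial minimal solution, of size `n`, were `a ⊕ b`, then `b` would be
`(t₁, k, …, k, t₂)` with `j` inner entries, `0 < j ≤ n - 3`. From
`mat t₂ * mat k ^ j * mat t₁ = ±1` the product `mat t₁ * mat t₂` is `±(mat k ^ j)⁻¹`, so it
commutes with `mat k`; comparing entries gives `t₁ = t₂ = t` and `t (k - t) = 0`.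
Over a field `t = 0` or `t = k`, and `b` then yields a constant solution of size `j` or `j + 2`,
both smaller than `n`. For `N ∈ {4, 6, 8, 12, 24}` the zero divisors allow further values of `t`;
that these still produce shorter constant solutions is a finite check.
-/

namespace Monomial

/-- The elementary matrix `[[a, -1], [1, 0]]` over `ZMod N`. -/
def mat {N : ℕ} (a : ZMod N) : Matrix (Fin 2) (Fin 2) (ZMod N) := !![a, -1; 1, 0]

/-- `M [a₁, …, aₙ] = mat aₙ * ⋯ * mat a₁`. -/
def M {N : ℕ} (l : List (ZMod N)) : Matrix (Fin 2) (Fin 2) (ZMod N) :=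
  (l.reverse.map mat).prod

/-- A tuple is a solution of (E_N) if the associated matrix is `±Id`. -/
def IsSolution {N : ℕ} (l : List (ZMod N)) : Prop := M l = 1 ∨ M l = -1

/-- The sum `(a₁,…,aₙ) ⊕ (b₁,…,bₘ) = (a₁+bₘ, a₂,…,aₙ₋₁, aₙ+b₁, b₂,…,bₘ₋₁)`. -/
def osum {N : ℕ} (u v : List (ZMod N)) : List (ZMod N) :=
  (u.headI + v.getLastD 0) ::
    ((u.drop 1).dropLast ++ (u.getLastD 0 + v.headI) :: (v.drop 1).dropLast)

/-- Equivalence: `v` is a cyclic permutation of `u` or of the reversal of `u`. -/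
def CyclicEquiv {N : ℕ} (u v : List (ZMod N)) : Prop :=
  (∃ i, v = u.rotate i) ∨ (∃ i, v = u.reverse.rotate i)

/-- A tuple is reducible if, up to equivalence, it is a sum of an `m`-tuple (`m ≥ 3`)
with a solution of size `l ≥ 3`. -/
def Reducible {N : ℕ} (c : List (ZMod N)) : Prop :=
  ∃ a b : List (ZMod N), 3 ≤ a.length ∧ 3 ≤ b.length ∧ IsSolution b ∧
    CyclicEquiv c (osum a b)

/-- An irreducible solution: a solution which is not reducible (and `(0,0)` is
not considered irreducible). -/
def IrreducibleSol {N : ℕ} (c : List (ZMod N)) : Prop :=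
  IsSolution c ∧ ¬ Reducible c ∧ c ≠ [0, 0]

/-- The size of the `k`-monomial minimal solution of (E_N): the least `n > 0` such
that the constant `n`-tuple `(k, …, k)` is a solution. -/
noncomputable def monomialMinimalSize (N : ℕ) (k : ZMod N) : ℕ :=
  sInf {n | 0 < n ∧ IsSolution (List.replicate n k)}

/-- `N` is monomially irreducible if, for every `k ≠ 0`, the `k`-monomial minimal
solution of (E_N) is irreducible. -/
def MonomiallyIrreducible (N : ℕ) : Prop :=
  ∀ k : ZMod N, k ≠ 0 → IrreducibleSol (List.replicate (monomialMinimalSize N k) k)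

/-- The continuant `Kₙ(x, …, x)` at a constant tuple: `K₀ = 1`, `K₁ = x`,
`Kₙ₊₂ = x * Kₙ₊₁ - Kₙ`. -/
def K {N : ℕ} (x : ZMod N) : ℕ → ZMod N
  | 0 => 1
  | 1 => x
  | n + 2 => x * K x (n + 1) - K x n

end Monomial

section PlusMinusOne

theorem mul_mul_eq_one_rotate {M : Type*} [Monoid M] [IsDedekindFiniteMonoid M] {a x b : M}
    (h : a * x * b = 1) : x * (b * a) = 1 ∧ b * a * x = 1 := by
  refine ⟨?_, ?_⟩
  · rw [← mul_assoc]
    exact mul_eq_one_symm (by rwa [← mul_assoc])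
  · rw [mul_assoc]
    exact mul_eq_one_symm h

theorem Commute.of_mul_eq_one {M : Type*} [Monoid M] [IsDedekindFiniteMonoid M] {c x y : M}
    (hc : Commute c x) (h : x * y = 1) : Commute c y :=
  calc c * y = y * x * c * y := by rw [mul_eq_one_symm h, one_mul]
    _ = y * c * (x * y) := by rw [mul_assoc y, ← hc.eq, ← mul_assoc, mul_assoc]
    _ = y * c := by rw [h, mul_one]

variable {R : Type*} [Ring R]

def IsPlusMinusOne (a : R) : Prop := a = 1 ∨ a = -1

instance [DecidableEq R] : DecidablePred (IsPlusMinusOne : R → Prop) :=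
  fun _ => instDecidableOr

theorem IsPlusMinusOne.neg_iff {a : R} : IsPlusMinusOne (-a) ↔ IsPlusMinusOne a := by
  rw [IsPlusMinusOne, IsPlusMinusOne, neg_eq_iff_eq_neg, neg_inj, or_comm]

variable [IsDedekindFiniteMonoid R]

theorem IsPlusMinusOne.mul_rotate {a x b : R} (h : IsPlusMinusOne (a * x * b)) :
    IsPlusMinusOne (x * (b * a)) := by
  rcases h with h | h
  · exact Or.inl (mul_mul_eq_one_rotate h).1
  · have h' : a * -x * b = 1 := by rw [mul_neg, neg_mul, h, neg_neg]
    rw [← IsPlusMinusOne.neg_iff, ← neg_mul]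
    exact Or.inl (mul_mul_eq_one_rotate h').1

theorem IsPlusMinusOne.commute_mul {a x b c : R} (h : IsPlusMinusOne (a * x * b))
    (hc : Commute c x) : Commute c (b * a) := by
  rcases h with h | h
  · exact hc.of_mul_eq_one (mul_mul_eq_one_rotate h).1
  · have h' : a * -x * b = 1 := by rw [mul_neg, neg_mul, h, neg_neg]
    exact hc.neg_right.of_mul_eq_one (mul_mul_eq_one_rotate h').1

end PlusMinusOne

namespace Monomial

variable {N : ℕ}

theorem isSolution_iff (l : List (ZMod N)) : IsSolution l ↔ IsPlusMinusOne (M l) := Iff.rfl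

instance (l : List (ZMod N)) : Decidable (IsSolution l) :=
  decidable_of_iff' _ (isSolution_iff l)

theorem mat_zero_mul_mat_zero : mat (0 : ZMod N) * mat 0 = -1 := by
  rw [mat, Matrix.mul_fin_two, Matrix.one_fin_two]
  norm_num

theorem isUnit_mat (a : ZMod N) : IsUnit (mat a) := by
  rw [Matrix.isUnit_iff_isUnit_det, mat, Matrix.det_fin_two_of]
  simp

theorem eq_and_mul_sub_eq_zero_of_commute {k t₁ t₂ : ZMod N}
    (h : Commute (mat k) (mat t₁ * mat t₂)) : t₁ = t₂ ∧ t₁ * (k - t₁) = 0 := by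
  have h := h.eq
  rw [mat, mat, mat, Matrix.mul_fin_two, Matrix.mul_fin_two, Matrix.mul_fin_two] at h
  have e₁₁ := congrFun (congrFun h 1) 1
  have e₀₁ := congrFun (congrFun h 0) 1
  simp only [Matrix.of_apply, Matrix.cons_val', Matrix.cons_val_zero, Matrix.cons_val_one,
    Matrix.empty_val', Matrix.cons_val_fin_one] at e₁₁ e₀₁
  exact ⟨by linear_combination -e₁₁, by linear_combination -e₀₁ + t₁ * e₁₁⟩

theorem M_cons (x : ZMod N) (l : List (ZMod N)) : M (x :: l) = M l * mat x := by
  simp [M]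

theorem M_append_singleton (l : List (ZMod N)) (y : ZMod N) : M (l ++ [y]) = mat y * M l := by
  simp [M]

theorem M_replicate (n : ℕ) (k : ZMod N) : M (List.replicate n k) = mat k ^ n := by
  induction n with
  | zero => rfl
  | succ n ih => rw [List.replicate_succ, M_cons, ih, ← pow_succ]

theorem M_cons_append_singleton (x y : ZMod N) (l : List (ZMod N)) :
    M (x :: (l ++ [y])) = mat y * M l * mat x := by
  rw [M_cons, M_append_singleton]

theorem isSolution_of_zero_cons_append_zero {l : List (ZMod N)}
    (h : IsSolution (0 :: (l ++ [0]))) : IsSolution l := by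
  rw [isSolution_iff, M_cons_append_singleton] at h
  rw [isSolution_iff]
  simpa only [mat_zero_mul_mat_zero, mul_neg_one, IsPlusMinusOne.neg_iff] using h.mul_rotate

theorem eq_and_mul_sub_eq_zero_of_isSolution {k t₁ t₂ : ZMod N} {j : ℕ}
    (h : IsSolution (t₁ :: (List.replicate j k ++ [t₂]))) : t₁ = t₂ ∧ t₁ * (k - t₁) = 0 := by
  rw [isSolution_iff, M_cons_append_singleton, M_replicate] at h
  exact eq_and_mul_sub_eq_zero_of_commute (h.commute_mul (Commute.self_pow _ j))

theorem exists_isSolution_replicate [NeZero N] (k : ZMod N) :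
    ∃ n, 0 < n ∧ IsSolution (List.replicate n k) := by
  obtain ⟨u, hu⟩ := isUnit_mat k
  refine ⟨orderOf u, orderOf_pos u, Or.inl ?_⟩
  rw [M_replicate, ← hu, ← Units.val_pow_eq_pow_val, pow_orderOf_eq_one, Units.val_one]

theorem monomialMinimalSize_le {k : ZMod N} {n : ℕ} (hn : 0 < n)
    (h : IsSolution (List.replicate n k)) : monomialMinimalSize N k ≤ n :=
  Nat.sInf_le ⟨hn, h⟩

theorem monomialMinimalSize_spec {k : ZMod N} {n : ℕ} (hn : 0 < n)
    (h : IsSolution (List.replicate n k)) :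
    0 < monomialMinimalSize N k ∧ IsSolution (List.replicate (monomialMinimalSize N k) k) :=
  Nat.sInf_mem (⟨n, hn, h⟩ : ∃ n, 0 < n ∧ IsSolution (List.replicate n k))

theorem eq_replicate_of_cyclicEquiv {n : ℕ} {k : ZMod N} {v : List (ZMod N)}
    (h : CyclicEquiv (List.replicate n k) v) : v = List.replicate n k := by
  rcases h with ⟨i, rfl⟩ | ⟨i, rfl⟩
  · exact List.rotate_replicate k n i
  · rw [List.reverse_replicate, List.rotate_replicate]

theorem exists_eq_cons_replicate_of_osum_eq_replicate {a b : List (ZMod N)} {n : ℕ}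
    {k : ZMod N} (ha : 3 ≤ a.length) (hb : 3 ≤ b.length) (h : osum a b = List.replicate n k) :
    ∃ t₁ t₂ j, b = t₁ :: (List.replicate j k ++ [t₂]) ∧ 0 < j ∧ j + 3 ≤ n := by
  obtain ⟨t₁, b', t₂, rfl⟩ : ∃ t₁ b' t₂, b = t₁ :: (b' ++ [t₂]) := by
    rcases b with _ | ⟨t₁, b⟩
    · simp at hb
    rcases List.eq_nil_or_concat b with rfl | ⟨b', t₂, rfl⟩
    · simp at hb
    exact ⟨t₁, b', t₂, by simp⟩
  simp only [osum, List.headI_cons, List.drop_one, List.tail_cons, List.dropLast_concat] at h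
  obtain ⟨hlen, hk⟩ := List.eq_replicate_iff.1 h
  have hb' : b' = List.replicate b'.length k :=
    List.eq_replicate_iff.2 ⟨rfl, fun x hx => hk x (by simp [hx])⟩
  simp only [List.length_cons, List.length_append, List.length_dropLast, List.length_tail,
    List.length_nil] at hlen hb
  exact ⟨t₁, t₂, b'.length, by rw [← hb'], by omega, by omega⟩

/-- `n` need not be the minimal size: it only bounds the sizes `j` to inspect, which makes the
condition decidable. -/
def IsIrreducibilityWitness (k : ZMod N) (n : ℕ) : Prop :=
  0 < n ∧ IsSolution (List.replicate n k) ∧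
    ∀ j < n, 0 < j → ∀ t : ZMod N, t * (k - t) = 0 → IsSolution (t :: (List.replicate j k ++ [t])) →
      ∃ m < j + 3, 0 < m ∧ IsSolution (List.replicate m k)

set_option synthInstance.maxSize 1000 in
instance [NeZero N] (k : ZMod N) (n : ℕ) : Decidable (IsIrreducibilityWitness k n) := by
  unfold IsIrreducibilityWitness; infer_instance

theorem irreducibleSol_of_isIrreducibilityWitness {k : ZMod N} (hk : k ≠ 0) {n : ℕ}
    (hw : IsIrreducibilityWitness k n) :
    IrreducibleSol (List.replicate (monomialMinimalSize N k) k) := by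
  obtain ⟨hn, hsol, hshort⟩ := hw
  have hle := monomialMinimalSize_le hn hsol
  obtain ⟨hpos, hmin⟩ := monomialMinimalSize_spec hn hsol
  refine ⟨hmin, ?_, fun h => hk ((List.eq_replicate_iff.1 h.symm).2 0 (by simp)).symm⟩
  rintro ⟨a, b, ha, hb, hbsol, hab⟩
  obtain ⟨t₁, t₂, j, rfl, hj, hjn⟩ :=
    exists_eq_cons_replicate_of_osum_eq_replicate ha hb (eq_replicate_of_cyclicEquiv hab)
  obtain ⟨rfl, ht⟩ := eq_and_mul_sub_eq_zero_of_isSolution hbsol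
  obtain ⟨m, hmj, hm, hmsol⟩ := hshort j (by omega) hj t₁ ht hbsol
  have := monomialMinimalSize_le hm hmsol
  omega

theorem isIrreducibilityWitness_of_prime [Fact N.Prime] (k : ZMod N) :
    IsIrreducibilityWitness k (monomialMinimalSize N k) := by
  have : NeZero N := ⟨(Fact.out : N.Prime).ne_zero⟩
  obtain ⟨n, hn, hsol⟩ := exists_isSolution_replicate k
  obtain ⟨hpos, hmin⟩ := monomialMinimalSize_spec hn hsol
  refine ⟨hpos, hmin, fun j _ hj t ht hsol => ?_⟩
  rcases mul_eq_zero.1 ht with rfl | ht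
  · exact ⟨j, by omega, hj, isSolution_of_zero_cons_append_zero hsol⟩
  · rw [← eq_of_sub_eq_zero ht] at hsol
    refine ⟨j + 2, by omega, by omega, ?_⟩
    rwa [← List.replicate_succ', ← List.replicate_succ] at hsol

-- The search bound `B` keeps the hypothesis decidable.
theorem monomiallyIrreducible_of_exists_witness (B : ℕ)
    (H : ∀ k : ZMod N, k ≠ 0 → ∃ n < B, IsIrreducibilityWitness k n) :
    MonomiallyIrreducible N := fun k hk =>
  let ⟨_, _, hw⟩ := H k hk
  irreducibleSol_of_isIrreducibilityWitness hk hw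

theorem stmt0_general (N : ℕ)
    (h : N.Prime ∨ N ∈ ({4, 6, 8, 12, 24} : Set ℕ)) :
    MonomiallyIrreducible N := by
  rcases h with hp | hN
  · have : Fact N.Prime := ⟨hp⟩
    exact fun k hk => irreducibleSol_of_isIrreducibilityWitness hk
      (isIrreducibilityWitness_of_prime k)
  · simp only [Set.mem_insert_iff, Set.mem_singleton_iff] at hN
    rcases hN with rfl | rfl | rfl | rfl | rfl <;>
      exact monomiallyIrreducible_of_exists_witness 25 (by decide +kernel)

theorem stmt0 (N : ℕ) (hN : 2 ≤ N)
    (h : N.Prime ∨ N ∈ ({4, 6, 8, 12, 24} : Set ℕ)) :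
    MonomiallyIrreducible N :=
  stmt0_general N h

end Monomial
end

section
/- Let n ≥ 2 and N ≥ 2 be integers, k ∈ ℤ/Nℤ, and ε ∈ {1, −1} such that K_n(k) = ε̄ in ℤ/Nℤ. Set a = ε̄·K_{n−1}(k). Then the (n+2)-tuple (a, k, …, k, a) ∈ (ℤ/Nℤ)^{n+2} (with n copies of k between the two a's) is a solution of (E_N). -/
namespace Monomial

lemma mat_pow {N : ℕ} (k : ZMod N) : ∀ m, mat k ^ (m + 2) =
    !![K k (m + 2), -K k (m + 1); K k (m + 1), -K k m] := by
  intro m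
  induction m with
  | zero =>
      ext i j
      fin_cases i <;> fin_cases j <;>
        simp [pow_two, mat, Matrix.mul_fin_two, K] <;> ring
  | succ m ih =>
      have h : mat k ^ (m + 3) = mat k * mat k ^ (m + 2) := (pow_succ' _ _)
      have e3 : K k (m + 3) = k * K k (m + 2) - K k (m + 1) := rfl
      have e2 : K k (m + 2) = k * K k (m + 1) - K k m := rfl
      rw [h, ih, mat, Matrix.mul_fin_two, e3]
      ext i j
      fin_cases i <;> fin_cases j <;> simp <;> try ring
      rw [Nat.add_comm 1 m, Nat.add_comm 2 m]
      linear_combination e2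

lemma M_eq {N : ℕ} (a k : ZMod N) (n : ℕ) :
    M (a :: (List.replicate n k ++ [a])) = mat a * mat k ^ n * mat a := by
  simp [M, List.reverse_cons, List.map_append, List.prod_append, List.map_replicate,
    List.prod_replicate, mul_assoc]

theorem stmt3 (N n : ℕ) (hN : 2 ≤ N) (hn : 2 ≤ n) (k : ZMod N) (ε : ℤ)
    (hε : ε = 1 ∨ ε = -1) (hK : K k n = (ε : ZMod N)) :
    IsSolution (((ε : ZMod N) * K k (n - 1)) ::
      (List.replicate n k ++ [(ε : ZMod N) * K k (n - 1)])) := by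
  obtain ⟨m, rfl⟩ : ∃ m, n = m + 2 := ⟨n - 2, by omega⟩
  set e : ZMod N := (ε : ZMod N) with he
  set b : ZMod N := K k (m + 1) with hb
  set c : ZMod N := K k m with hc
  have hee : e * e = 1 := by
    rcases hε with h | h <;> simp [he, h]
  have hdet : -(e * c) + b * b = 1 := by
    have h1 : (mat k ^ (m + 2)).det = 1 := by
      rw [Matrix.det_pow]
      simp [mat, Matrix.det_fin_two_of]
    rw [mat_pow, hK] at h1
    rw [Matrix.det_fin_two_of] at h1
    linear_combination h1
  have hb' : K k (m + 2 - 1) = b := rfl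
  have stepA : mat (e * b) * !![e, -b; b, -c] = !![0, -e; e, -b] := by
    rw [mat, Matrix.mul_fin_two]
    ext i j
    fin_cases i <;> fin_cases j <;> simp
    · linear_combination b * hee
    · linear_combination (-e) * hdet + (-c) * hee
  have stepB : !![(0 : ZMod N), -e; e, -b] * mat (e * b) = !![-e, 0; 0, -e] := by
    rw [mat, Matrix.mul_fin_two]
    ext i j
    fin_cases i <;> fin_cases j <;> simp
    linear_combination b * hee
  have key : M ((e * b) :: (List.replicate (m + 2) k ++ [e * b])) =
      !![-e, 0; 0, -e] := by
    rw [M_eq, mat_pow, hK, ← hb, ← hc, stepA, stepB]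
  rw [hb']
  rcases hε with h | h
  · right
    rw [key]
    ext i j
    fin_cases i <;> fin_cases j <;> simp [he, h, Matrix.one_fin_two]
  · left
    rw [key]
    ext i j
    fin_cases i <;> fin_cases j <;> simp [he, h, Matrix.one_fin_two]


end Monomial
end

section
/- Let N ≥ 2 with 16 | N. Then the (N/4 mod N)-monomial minimal solution of (E_N) has size 8 and is reducible. -/
namespace Monomial

theorem stmt6 (N : ℕ) (hN : 2 ≤ N) (h16 : 16 ∣ N) :
    monomialMinimalSize N ((N / 4 : ℕ) : ZMod N) = 8 ∧
      Reducible (List.replicate 8 ((N / 4 : ℕ) : ZMod N)) := by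
  obtain ⟨n, rfl⟩ := h16
  have hn : 1 ≤ n := by omega
  haveI : NeZero (16*n) := ⟨by omega⟩
  haveI : Fact (1 < 16*n) := ⟨by omega⟩
  have hdiv : 16*n/4 = 4*n := by omega
  rw [hdiv]
  set x : ZMod (16*n) := ((4*n : ℕ) : ZMod (16*n)) with hxdef
  have hx2 : x ^ 2 = 0 := by
    rw [hxdef, pow_two, ← Nat.cast_mul, ZMod.natCast_eq_zero_iff]
    exact ⟨n, by ring⟩
  have hx3 : x ^ 3 = 0 := by rw [pow_succ, hx2, zero_mul]
  have hx4 : x ^ 4 = 0 := by rw [pow_succ, hx3, zero_mul]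
  have h4x : x * 4 = 0 := by
    rw [hxdef, show ((4:ZMod (16*n))) = ((4:ℕ):ZMod (16*n)) by norm_num,
      ← Nat.cast_mul, show (4*n)*4=16*n by ring, ZMod.natCast_self]
  have hxne : ∀ c : ℕ, 0 < c → c < 4 → (c : ZMod (16*n)) * x ≠ 0 := by
    intro c hc1 hc2 h
    rw [hxdef, show ((c:ZMod (16*n))) = ((c:ℕ):ZMod (16*n)) by norm_num,
      ← Nat.cast_mul, ZMod.natCast_eq_zero_iff] at h
    have := Nat.le_of_dvd (by positivity) h
    nlinarith [this, hn, hc1, hc2]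
  have hone : (1 : ZMod (16*n)) ≠ 0 := one_ne_zero
  have hMrep : ∀ m, M (List.replicate m x) = (mat x)^m := by
    intro m
    simp [M, List.reverse_replicate, List.map_replicate, List.prod_replicate]
  have p2 : (mat x)^2 = !![-1,-x;x,-1] := by
    rw [pow_two]
    ext i j
    fin_cases i <;> fin_cases j <;>
      simp [mat, Matrix.mul_apply, Fin.sum_univ_two] <;> ring_nf <;> simp [hx2, h4x]
  have p4 : (mat x)^4 = !![1,2*x;-(2*x),1] := by
    rw [show (4:ℕ) = 2*2 by rfl, pow_mul, p2]
    ext i j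
    fin_cases i <;> fin_cases j <;>
      simp [pow_two, Matrix.mul_apply, Fin.sum_univ_two] <;> ring_nf <;> simp [hx2, h4x]
  have p8 : (mat x)^8 = 1 := by
    rw [show (8:ℕ) = 4*2 by rfl, pow_mul, p4]
    ext i j
    fin_cases i <;> fin_cases j <;>
      simp [pow_two, Matrix.mul_apply, Fin.sum_univ_two, Matrix.one_apply] <;> ring_nf <;>
        simp [hx2, h4x]
  have p3 : (mat x)^3 = !![-(2*x),1;-1,-x] := by
    rw [pow_succ, p2]
    ext i j
    fin_cases i <;> fin_cases j <;>
      simp [mat, Matrix.mul_apply, Fin.sum_univ_two] <;> ring_nf <;> simp [hx2, h4x]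
  have p5 : (mat x)^5 = !![3*x,-1;1,2*x] := by
    rw [pow_succ, p4]
    ext i j
    fin_cases i <;> fin_cases j <;>
      simp [mat, Matrix.mul_apply, Fin.sum_univ_two] <;> ring_nf <;> simp [hx2, h4x]
  have p6 : (mat x)^6 = !![-1,-(3*x);3*x,-1] := by
    rw [pow_succ, p5]
    ext i j
    fin_cases i <;> fin_cases j <;>
      simp [mat, Matrix.mul_apply, Fin.sum_univ_two] <;> ring_nf <;> simp [hx2, h4x]
  have p7 : (mat x)^7 = !![0,1;-1,-(3*x)] := by
    rw [pow_succ, p6]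
    ext i j
    fin_cases i <;> fin_cases j <;>
      simp [mat, Matrix.mul_apply, Fin.sum_univ_two] <;> ring_nf <;> simp [hx2, h4x]
  have key : ∀ a b c d : ZMod (16*n), b ≠ 0 →
      ¬(!![a,b;c,d] = (1 : Matrix (Fin 2) (Fin 2) (ZMod (16*n))) ∨ !![a,b;c,d] = -1) := by
    rintro a b c d hb (h|h) <;>
      · have := congrFun (congrFun h 0) 1
        simp [Matrix.one_apply] at this
        exact hb this
  have hS8 : 8 ∈ {m | 0 < m ∧ IsSolution (List.replicate m x)} :=
    ⟨by norm_num, Or.inl ((hMrep 8).trans p8)⟩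
  constructor
  · -- minimal size is 8
    unfold monomialMinimalSize
    have h1 : sInf {m | 0 < m ∧ IsSolution (List.replicate m x)} ≤ 8 := Nat.sInf_le hS8
    obtain ⟨hpos, hsol⟩ := Nat.sInf_mem (⟨8, hS8⟩ :
      Set.Nonempty {m | 0 < m ∧ IsSolution (List.replicate m x)})
    rw [IsSolution, hMrep] at hsol
    set s := sInf {m | 0 < m ∧ IsSolution (List.replicate m x)} with hs
    have h18 : s = 1 ∨ s = 2 ∨ s = 3 ∨ s = 4 ∨ s = 5 ∨ s = 6 ∨ s = 7 ∨ s = 8 := by omega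
    rcases h18 with h|h|h|h|h|h|h|h <;> rw [h] at hsol
    · rw [pow_one, mat] at hsol
      exact absurd hsol (key _ _ _ _ (by simpa using hone))
    · rw [p2] at hsol
      exact absurd hsol (key _ _ _ _ (by simpa using hxne 1 one_pos (by norm_num)))
    · rw [p3] at hsol
      exact absurd hsol (key _ _ _ _ hone)
    · rw [p4] at hsol
      exact absurd hsol (key _ _ _ _ (by simpa using hxne 2 (by norm_num) (by norm_num)))
    · rw [p5] at hsol
      exact absurd hsol (key _ _ _ _ (by simpa using hone))
    · rw [p6] at hsol
      exact absurd hsol (key _ _ _ _ (by simpa using hxne 3 (by norm_num) (by norm_num)))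
    · rw [p7] at hsol
      exact absurd hsol (key _ _ _ _ hone)
    · exact h
  · -- reducible
    have hMb : M [-x, x, x, -x] = 1 := by
      show (([-x,x,x,-x] : List (ZMod (16*n))).reverse.map mat).prod = 1
      simp only [List.reverse_cons, List.reverse_nil, List.nil_append, List.cons_append,
        List.map_cons, List.map_nil, List.prod_cons, List.prod_nil, mul_one]
      ext i j
      fin_cases i <;> fin_cases j <;>
        simp [mat, Matrix.mul_apply, Fin.sum_univ_two, Matrix.one_apply] <;> ring_nf <;>
          simp [hx2, hx3, hx4, h4x]
    refine ⟨[2*x,x,x,x,x,2*x], [-x,x,x,-x], by simp, by simp, Or.inl hMb,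
      Or.inl ⟨0, ?_⟩⟩
    rw [List.rotate_zero]
    show osum [2*x,x,x,x,x,2*x] [-x,x,x,-x] = List.replicate 8 x
    simp [osum, List.replicate]
    ring

end Monomial
end
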